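/- arXiv:1611.03301 — 12 statements merged into one kernel-verified Lean document; each statement's English description precedes it below -/
import Mathlib

section
/- Let (X, ⪯) be a partially ordered set, x₀ ∈ X, and η : X → ℝ ∪ {±∞} a function monotone with respect to ⪯ (i.e., x₁ ⪯ x₂ implies η(x₁) ≤ η(x₂)). For x ∈ X write S(x) = {x' ∈ X : x' ⪯ x}. Assume: (A) −∞ < inf{η(x) : x ∈ S(x₀)} < +∞; (B) for any x ∈ S(x₀)\{x₀} with η(x) finite and any x' ∈ S(x)\{x}, one has η(x) > η(x'); (C) for any sequence (xₙ) ⊂ S(x₀) with xₙ ∈ S(xₙ₋₁)\{xₙ₋₁} for all n and η(xₙ) − inf{η(x) : x ∈ S(xₙ₋₁)} → 0, there exists u ∈ X with u ∈ S(xₙ) for all n. Then there exists x̂ ∈ X such that x̂ ∈ S(x₀) and S(x̂) = {x̂}. -/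
open Filter Topology

/-!
Suppose no element below `x₀` is minimal. Then from any `x ≤ x₀` one can step strictly down to
some `y` whose value `η y` is within `δ` of `inf η(S(x))`, for any `δ > 0`; iterating with
`δ → 0` yields a sequence to which (C) applies, giving a lower bound `u` of the whole sequence.
Then `η u ≤ η(xₙ₊₁) < inf η(S(xₙ)) + δₙ ≤ η x' + δₙ` for every `x' ≤ u`, so `η u ≤ η x'`, while
(B) gives `η x' < η u` whenever `x' < u`: thus `u` is minimal, a contradiction.
-/

namespace EReal

lemma lt_add_coe_of_pos {m : EReal} (hbot : m ≠ ⊥) (htop : m ≠ ⊤) {δ : ℝ} (hδ : 0 < δ) :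
    m < m + δ := by
  lift m to ℝ using ⟨htop, hbot⟩
  exact_mod_cast lt_add_of_pos_right m hδ

lemma tendsto_sub_nhds_zero_of_le_of_lt_add {ι : Type*} {l : Filter ι} {a b : ι → EReal}
    {δ : ι → ℝ} (hδ : Tendsto δ l (𝓝 0)) (hle : ∀ i, b i ≤ a i) (hlt : ∀ i, a i < b i + δ i) :
    Tendsto (fun i => a i - b i) l (𝓝 0) := by
  refine tendsto_of_tendsto_of_tendsto_of_le_of_le tendsto_const_nhds
    (by simpa using tendsto_coe.2 hδ) (fun i => ?_) (fun i => ?_)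
  · have hb : b i ≠ ⊥ := fun h => by simpa [h] using hlt i
    exact (sub_nonneg (.inl (hlt i).ne_top) (.inr hb)).2 (hle i)
  · rw [sub_le_iff_le_add (.inr (coe_ne_top _)) (.inr (coe_ne_bot _)), add_comm]
    exact (hlt i).le

lemma le_of_forall_lt_add_coe {ι : Type*} {l : Filter ι} [l.NeBot] {a b : EReal} {δ : ι → ℝ}
    (hδ : Tendsto δ l (𝓝 0)) (h : ∀ i, a < b + δ i) : a ≤ b := by
  rw [← sub_nonpos, ← coe_zero]
  refine ge_of_tendsto' (tendsto_coe.2 hδ) fun i => ?_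
  rw [sub_le_iff_le_add (.inr (coe_ne_top _)) (.inr (coe_ne_bot _)), add_comm]
  exact (h i).le

end EReal

theorem exists_seq_of_forall_exists {α : Type*} {p : α → Prop} {r : ℕ → α → α → Prop} {a : α}
    (ha : p a) (h : ∀ n x, p x → ∃ y, p y ∧ r n x y) :
    ∃ s : ℕ → α, s 0 = a ∧ ∀ n, p (s n) ∧ r n (s n) (s (n + 1)) := by
  choose f hf using h
  let s : ℕ → {x // p x} := fun n => Nat.rec ⟨a, ha⟩ (fun n x => ⟨f n x x.2, (hf n x x.2).1⟩) n
  exact ⟨fun n => (s n).1, rfl, fun n => ⟨(s n).2, (hf n _ (s n).2).2⟩⟩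

section InfBelow

variable {X : Type*} [Preorder X] {η : X → EReal}

noncomputable def infBelow (η : X → EReal) (x : X) : EReal := sInf (η '' Set.Iic x)

lemma infBelow_le {x y : X} (h : y ≤ x) : infBelow η x ≤ η y :=
  sInf_le ⟨y, h, rfl⟩

lemma infBelow_anti : Antitone (infBelow η) := fun _ _ h =>
  sInf_le_sInf (Set.image_mono (Set.Iic_subset_Iic.2 h))

lemma exists_lt_lt_of_infBelow_lt (hη : Monotone η) {x : X} (hx : ¬IsMin x) {c : EReal}
    (hc : infBelow η x < c) : ∃ y < x, η y < c := by
  obtain ⟨_, ⟨w, hwx, rfl⟩, hwc⟩ := sInf_lt_iff.1 hc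
  by_cases hxw : x ≤ w
  · obtain ⟨z, hzx⟩ := not_isMin_iff.1 hx
    exact ⟨z, hzx, (hη hzx.le).trans_lt ((hη hxw).trans_lt hwc)⟩
  · exact ⟨w, lt_of_le_not_ge hwx hxw, hwc⟩

lemma exists_lt_lt_infBelow_add (hη : Monotone η) {x : X} (hx : ¬IsMin x)
    (hbot : infBelow η x ≠ ⊥) (htop : infBelow η x ≠ ⊤) {δ : ℝ} (hδ : 0 < δ) :
    ∃ y < x, η y < infBelow η x + δ :=
  exists_lt_lt_of_infBelow_lt hη hx (EReal.lt_add_coe_of_pos hbot htop hδ)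

lemma exists_seq_lt_lt_infBelow_add (hη : Monotone η) {x₀ : X} (hbot : ⊥ < infBelow η x₀)
    (htop : infBelow η x₀ < ⊤) (hmin : ∀ x ≤ x₀, ¬IsMin x) {δ : ℕ → ℝ} (hδ : ∀ n, 0 < δ n) :
    ∃ s : ℕ → X, s 0 = x₀ ∧ ∀ n, s (n + 1) < s n ∧ η (s (n + 1)) < infBelow η (s n) + δ n := by
  have hstep : ∀ n x, x ≤ x₀ ∧ infBelow η x < ⊤ →
      ∃ y, (y ≤ x₀ ∧ infBelow η y < ⊤) ∧ y < x ∧ η y < infBelow η x + δ n := by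
    rintro n x ⟨hx₀, hxtop⟩
    obtain ⟨y, hyx, hy⟩ := exists_lt_lt_infBelow_add hη (hmin x hx₀)
      (hbot.trans_le (infBelow_anti hx₀)).ne' hxtop.ne (hδ n)
    refine ⟨y, ⟨hyx.le.trans hx₀, ?_⟩, hyx, hy⟩
    exact (infBelow_le le_rfl).trans_lt (hy.trans (EReal.add_lt_top hxtop.ne (EReal.coe_ne_top _)))
  obtain ⟨s, hs0, hs⟩ := exists_seq_of_forall_exists ⟨le_rfl, htop⟩ hstep
  exact ⟨s, hs0, fun n => (hs n).2⟩

end InfBelow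

theorem partial_order_principle {X : Type*} [PartialOrder X] (x₀ : X) (η : X → EReal)
    (hmono : ∀ x₁ x₂ : X, x₁ ≤ x₂ → η x₁ ≤ η x₂)
    (hA : ⊥ < sInf (η '' {x | x ≤ x₀}) ∧ sInf (η '' {x | x ≤ x₀}) < ⊤)
    (hB : ∀ x, x ≤ x₀ → x ≠ x₀ → η x ≠ ⊥ → η x ≠ ⊤ →
      ∀ x', x' ≤ x → x' ≠ x → η x' < η x)
    (hC : ∀ x : ℕ → X, x 0 = x₀ → (∀ n, x (n + 1) ≤ x n ∧ x (n + 1) ≠ x n) →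
      Tendsto (fun n => η (x (n + 1)) - sInf (η '' {x' | x' ≤ x n})) atTop (nhds (0 : EReal)) →
      ∃ u : X, ∀ n, u ≤ x n) :
    ∃ xhat : X, xhat ≤ x₀ ∧ ∀ x', x' ≤ xhat → x' = xhat := by
  by_contra hnone
  have hmin : ∀ x ≤ x₀, ¬IsMin x := fun x hx hxmin => hnone ⟨x, hx, fun _ h => hxmin.eq_of_le h⟩
  let δ : ℕ → ℝ := fun n => 1 / ((n : ℝ) + 1)
  have hδ : Tendsto δ atTop (𝓝 0) := tendsto_one_div_add_atTop_nhds_zero_nat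
  obtain ⟨s, hs0, hs⟩ := exists_seq_lt_lt_infBelow_add hmono hA.1 hA.2 hmin
    (δ := δ) fun n => Nat.one_div_pos_of_nat
  obtain ⟨u, hu⟩ := hC s hs0 (fun n => ⟨(hs n).1.le, (hs n).1.ne⟩)
    (EReal.tendsto_sub_nhds_zero_of_le_of_lt_add hδ (fun n => infBelow_le (hs n).1.le)
      fun n => (hs n).2)
  have hux₀ : u < x₀ := hs0 ▸ (hu 1).trans_lt (hs 0).1
  obtain ⟨x', hx'u⟩ := not_isMin_iff.1 (hmin u hux₀.le)
  have hηu_bot : η u ≠ ⊥ := (hA.1.trans_le (infBelow_le hux₀.le)).ne'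
  have hηu_top : η u ≠ ⊤ := ((hmono _ _ (hu 1)).trans_lt ((hs 0).2.trans
    (EReal.add_lt_top (hs0 ▸ hA.2.ne) (EReal.coe_ne_top _)))).ne
  refine (hB u hux₀.le hux₀.ne hηu_bot hηu_top x' hx'u.le hx'u.ne).not_ge
    (EReal.le_of_forall_lt_add_coe hδ fun n => ?_)
  calc η u ≤ η (s (n + 1)) := hmono _ _ (hu _)
    _ < infBelow η (s n) + δ n := (hs n).2
    _ ≤ η x' + δ n := by gcongr; exact infBelow_le (hx'u.le.trans (hu n))
end

section
/- Let Y be a real vector space, D ⊂ Y a convex cone, and H ⊂ D\(−D) a D-convex set (i.e., H + D is convex). Define ξ_H : Y → ℝ ∪ {±∞} by ξ_H(y) = inf{t ∈ ℝ : y ∈ tH − D} (with ξ_H(y) = +∞ if no such t exists). Then there exists z ∈ Y with ξ_H(z) = −∞ if and only if 0 ∈ vcl(H + D), where vcl(A) = {y ∈ Y : ∃ v ∈ Y, ∃ λₙ ≥ 0, λₙ → 0, with y + λₙ v ∈ A for all n}. -/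
/-
Proof idea. Writing t = -λ⁻¹ with λ > 0, a point -v lies in tH - D exactly when λv ∈ H + D, since D
is invariant under positive scaling. So ξ_H(-v) = -∞ means λ•v ∈ H + D for arbitrarily small λ > 0,
i.e. 0 ∈ vcl(H + D) with direction v; conversely the step sizes λₙ of such a sequence are positive
because 0 ∉ H + D (as H ∩ -D = ∅), and then tₙ = -λₙ⁻¹ → -∞.
-/

open Filter Topology Pointwise

/-- Vector closure of a set. -/
def vcl {Y : Type*} [AddCommGroup Y] [Module ℝ Y] (A : Set Y) : Set Y :=
  {y | ∃ v : Y, ∃ l : ℕ → ℝ, (∀ n, 0 ≤ l n) ∧ Tendsto l atTop (nhds 0) ∧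
    ∀ n, y + l n • v ∈ A}

/-- Generalized Gerstewitz function generated by `D` and `H`. -/
noncomputable def xiH {Y : Type*} [AddCommGroup Y] [Module ℝ Y] (D H : Set Y) (y : Y) : EReal :=
  sInf ((fun t : ℝ => (t : EReal)) '' {t : ℝ | y ∈ t • H - D})

theorem EReal.sInf_coe_image_eq_bot_iff {S : Set ℝ} :
    sInf ((↑) '' S : Set EReal) = ⊥ ↔ ∀ r : ℝ, ∃ t ∈ S, t < r := by
  rw [sInf_eq_bot]
  constructor
  · intro h r
    obtain ⟨_, ⟨t, ht, rfl⟩, htr⟩ := h r (EReal.bot_lt_coe r)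
    exact ⟨t, ht, EReal.coe_lt_coe_iff.1 htr⟩
  · intro h b hb
    induction b using EReal.rec with
    | bot => exact absurd hb (lt_irrefl _)
    | top =>
      obtain ⟨t, ht, -⟩ := h 0
      exact ⟨t, ⟨t, ht, rfl⟩, EReal.coe_lt_top t⟩
    | coe r =>
      obtain ⟨t, ht, htr⟩ := h r
      exact ⟨t, ⟨t, ht, rfl⟩, EReal.coe_lt_coe_iff.2 htr⟩

theorem zero_notMem_add_of_subset_diff_neg {Y : Type*} [AddCommGroup Y] {D H : Set Y}
    (hH : H ⊆ D \ -D) : (0 : Y) ∉ H + D := by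
  rintro ⟨h, hh, d, hd, hhd⟩
  exact (hH hh).2 (by simpa [eq_neg_of_add_eq_zero_left hhd] using hd)

theorem neg_mem_neg_inv_smul_sub_iff {Y : Type*} [AddCommGroup Y] [Module ℝ Y] {D H : Set Y}
    (hD : ∀ α : ℝ, 0 ≤ α → ∀ d ∈ D, α • d ∈ D) {l : ℝ} (hl : 0 < l) (v : Y) :
    -v ∈ (-l⁻¹) • H - D ↔ l • v ∈ H + D := by
  constructor
  · rintro ⟨_, ⟨h, hh, rfl⟩, d, hd, hv⟩
    refine ⟨h, hh, l • d, hD l hl.le d hd, ?_⟩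
    rw [← neg_neg v, ← hv]
    match_scalars <;> field_simp
  · rintro ⟨h, hh, d, hd, hv⟩
    refine ⟨(-l⁻¹) • h, Set.smul_mem_smul_set hh, l⁻¹ • d, hD _ (inv_pos.2 hl).le d hd, ?_⟩
    rw [← inv_smul_smul₀ hl.ne' v, ← hv]
    module

theorem xiH_eq_bot_iff_general {Y : Type*} [AddCommGroup Y] [Module ℝ Y] (D H : Set Y)
    (hDsmul : ∀ α : ℝ, 0 ≤ α → ∀ d ∈ D, α • d ∈ D)
    (hH : H ⊆ D \ (-D)) :
    (∃ z : Y, xiH D H z = ⊥) ↔ (0 : Y) ∈ vcl (H + D) := by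
  simp only [xiH, EReal.sInf_coe_image_eq_bot_iff, Set.mem_ofPred_eq]
  constructor
  · rintro ⟨z, hz⟩
    choose t hzt ht using fun n : ℕ => hz (-(n + 1))
    have ht_pos : ∀ n, 0 < -t n := fun n => by linarith [ht n, n.cast_nonneg (α := ℝ)]
    have ht_top : Tendsto (fun n => -t n) atTop atTop :=
      tendsto_atTop_mono (fun n => by linarith [ht n]) tendsto_natCast_atTop_atTop
    refine ⟨-z, fun n => (-t n)⁻¹, fun n => (inv_pos.2 (ht_pos n)).le,
      tendsto_inv_atTop_zero.comp ht_top, fun n => ?_⟩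
    rw [zero_add, ← neg_mem_neg_inv_smul_sub_iff hDsmul (inv_pos.2 (ht_pos n)), neg_neg, inv_inv,
      neg_neg]
    exact hzt n
  · rintro ⟨v, l, hl0, hl, hlv⟩
    have hl_pos : ∀ n, 0 < l n := fun n => (hl0 n).lt_of_ne fun h =>
      zero_notMem_add_of_subset_diff_neg hH (by simpa [← h] using hlv n)
    have hl_bot : Tendsto (fun n => -(l n)⁻¹) atTop atBot :=
      tendsto_neg_atTop_atBot.comp <| tendsto_inv_nhdsGT_zero.comp <|
        tendsto_nhdsWithin_iff.2 ⟨hl, Eventually.of_forall hl_pos⟩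
    refine ⟨-v, fun r => ?_⟩
    obtain ⟨n, hn⟩ := (hl_bot.eventually (eventually_lt_atBot r)).exists
    exact ⟨_, (neg_mem_neg_inv_smul_sub_iff hDsmul (hl_pos n) v).2 (by simpa using hlv n), hn⟩

theorem xiH_eq_bot_iff {Y : Type*} [AddCommGroup Y] [Module ℝ Y] (D H : Set Y)
    (hDadd : ∀ a ∈ D, ∀ b ∈ D, a + b ∈ D)
    (hDsmul : ∀ α : ℝ, 0 ≤ α → ∀ d ∈ D, α • d ∈ D)
    (hH : H ⊆ D \ (-D)) (hconv : Convex ℝ (H + D)) :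
    (∃ z : Y, xiH D H z = ⊥) ↔ (0 : Y) ∈ vcl (H + D) :=
  xiH_eq_bot_iff_general D H hDsmul hH
end

section
/- Let Y be a real vector space, D ⊂ Y a convex cone, and H ⊂ D\(−D) a D-convex set with 0 ∉ vcl(H + D). Then the generalized Gerstewitz function ξ_H is monotone with respect to the order induced by D: if y₁ − y₂ ∈ −D, then ξ_H(y₁) ≤ ξ_H(y₂). -/
open Filter Topology Pointwise

theorem xiH_monotone {Y : Type*} [AddCommGroup Y] [Module ℝ Y] (D H : Set Y)
    (hDadd : ∀ a ∈ D, ∀ b ∈ D, a + b ∈ D)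
    (hDsmul : ∀ α : ℝ, 0 ≤ α → ∀ d ∈ D, α • d ∈ D)
    (hH : H ⊆ D \ (-D)) (hconv : Convex ℝ (H + D))
    (h0 : (0 : Y) ∉ vcl (H + D)) :
    ∀ y₁ y₂ : Y, y₁ - y₂ ∈ -D → xiH D H y₁ ≤ xiH D H y₂ := by
  intro y₁ y₂ hd
  apply sInf_le_sInf
  apply Set.image_mono
  intro t ht
  obtain ⟨a, ha, b, hb, hab⟩ := ht
  rw [Set.mem_neg] at hd
  refine ⟨a, ha, b + -(y₁ - y₂), hDadd b hb _ hd, ?_⟩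
  simp only [Set.mem_setOf_eq] at *
  rw [← hab]; abel
end

section
/- Let Y be a real vector space, D ⊂ Y a convex cone, and H ⊂ D\(−D) a D-convex set with 0 ∉ vcl(H + D). If ξ_H(y₁) < 0 and ξ_H(y₂) < 0, then ξ_H(y₁ + y₂) ≤ ξ_H(y₁) + ξ_H(y₂). -/
open Filter Topology Pointwise

/-!
For `t < 0` the cone property of `D` gives `t • H - D = t • (H + D)`, and for a convex set `C`
and `t₁, t₂ ≤ 0` one has `t₁ • C + t₂ • C ⊆ (t₁ + t₂) • C`. Hence the negative sublevel
parameters of `y₁` and `y₂` add up to sublevel parameters of `y₁ + y₂`.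
-/

section

variable {Y : Type*} [AddCommGroup Y] [Module ℝ Y]

lemma Convex.add_mem_smul_of_nonpos {C : Set Y} (hC : Convex ℝ C) {t₁ t₂ : ℝ}
    (ht₁ : t₁ ≤ 0) (ht₂ : t₂ ≤ 0) {y₁ y₂ : Y} (hy₁ : y₁ ∈ t₁ • C) (hy₂ : y₂ ∈ t₂ • C) :
    y₁ + y₂ ∈ (t₁ + t₂) • C := by
  obtain ⟨c₁, hc₁, rfl⟩ := hy₁
  obtain ⟨c₂, hc₂, rfl⟩ := hy₂
  obtain ⟨z, hz, hz_eq⟩ :=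
    hC.exists_mem_add_smul_eq hc₁ hc₂ (neg_nonneg.2 ht₁) (neg_nonneg.2 ht₂)
  exact ⟨z, hz, by linear_combination (norm := module) -hz_eq⟩

variable {D H : Set Y}

lemma smul_sub_eq_smul_add_of_neg (hD : ∀ α : ℝ, 0 ≤ α → ∀ d ∈ D, α • d ∈ D)
    {t : ℝ} (ht : t < 0) : t • H - D = t • (H + D) := by
  ext y
  constructor
  · rintro ⟨_, ⟨h, hh, rfl⟩, d, hd, rfl⟩
    refine ⟨h + (-t)⁻¹ • d, ⟨h, hh, _, hD _ (by simp [ht.le]) d hd, rfl⟩, ?_⟩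
    match_scalars <;> simp [ht.ne]
  · rintro ⟨_, ⟨h, hh, d, hd, rfl⟩, rfl⟩
    exact ⟨t • h, Set.smul_mem_smul_set hh, (-t) • d, hD _ (by linarith) d hd, by module⟩

lemma add_mem_smul_sub_of_neg (hD : ∀ α : ℝ, 0 ≤ α → ∀ d ∈ D, α • d ∈ D)
    (hconv : Convex ℝ (H + D)) {t₁ t₂ : ℝ} (ht₁ : t₁ < 0) (ht₂ : t₂ < 0) {y₁ y₂ : Y}
    (hy₁ : y₁ ∈ t₁ • H - D) (hy₂ : y₂ ∈ t₂ • H - D) : y₁ + y₂ ∈ (t₁ + t₂) • H - D := by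
  rw [smul_sub_eq_smul_add_of_neg hD ht₁] at hy₁
  rw [smul_sub_eq_smul_add_of_neg hD ht₂] at hy₂
  rw [smul_sub_eq_smul_add_of_neg hD (add_neg ht₁ ht₂)]
  exact hconv.add_mem_smul_of_nonpos ht₁.le ht₂.le hy₁ hy₂

lemma xiH_le {y : Y} {t : ℝ} (hy : y ∈ t • H - D) : xiH D H y ≤ t :=
  sInf_le ⟨t, hy, rfl⟩

lemma exists_mem_smul_sub_of_xiH_lt {y : Y} {c : EReal} (hc : xiH D H y < c) :
    ∃ t : ℝ, y ∈ t • H - D ∧ (t : EReal) < c := by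
  obtain ⟨_, ⟨t, ht, rfl⟩, htc⟩ := sInf_lt_iff.1 hc
  exact ⟨t, ht, htc⟩

end

theorem xiH_subadditive_of_neg_general {Y : Type*} [AddCommGroup Y] [Module ℝ Y] (D H : Set Y)
    (hDsmul : ∀ α : ℝ, 0 ≤ α → ∀ d ∈ D, α • d ∈ D)
    (hconv : Convex ℝ (H + D)) :
    ∀ y₁ y₂ : Y, xiH D H y₁ < 0 → xiH D H y₂ < 0 →
      xiH D H (y₁ + y₂) ≤ xiH D H y₁ + xiH D H y₂ := by
  intro y₁ y₂ h₁ h₂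
  refine EReal.le_add_of_forall_gt (.inr h₂.ne_top) (.inl h₁.ne_top) fun a ha b hb => ?_
  obtain ⟨t₁, hy₁, ht₁⟩ := exists_mem_smul_sub_of_xiH_lt (lt_min ha h₁)
  obtain ⟨t₂, hy₂, ht₂⟩ := exists_mem_smul_sub_of_xiH_lt (lt_min hb h₂)
  obtain ⟨ht₁a, ht₁0⟩ := lt_min_iff.1 ht₁
  obtain ⟨ht₂b, ht₂0⟩ := lt_min_iff.1 ht₂
  calc xiH D H (y₁ + y₂) ≤ ((t₁ + t₂ : ℝ) : EReal) :=
        xiH_le (add_mem_smul_sub_of_neg hDsmul hconv (mod_cast ht₁0) (mod_cast ht₂0) hy₁ hy₂)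
    _ ≤ a + b := by
        rw [EReal.coe_add]
        exact add_le_add ht₁a.le ht₂b.le

theorem xiH_subadditive_of_neg {Y : Type*} [AddCommGroup Y] [Module ℝ Y] (D H : Set Y)
    (hDadd : ∀ a ∈ D, ∀ b ∈ D, a + b ∈ D)
    (hDsmul : ∀ α : ℝ, 0 ≤ α → ∀ d ∈ D, α • d ∈ D)
    (hH : H ⊆ D \ (-D)) (hconv : Convex ℝ (H + D))
    (h0 : (0 : Y) ∉ vcl (H + D)) :
    ∀ y₁ y₂ : Y, xiH D H y₁ < 0 → xiH D H y₂ < 0 →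
      xiH D H (y₁ + y₂) ≤ xiH D H y₁ + xiH D H y₂ :=
  xiH_subadditive_of_neg_general D H hDsmul hconv
end

section
/- Let (X,d) be a metric space, S ⊆ X nonempty, Y a real vector space, D a convex cone in Y, H ⊂ D a D-convex set, γ > 0, and f : X → Y. For x ∈ S define S(x) = {z ∈ S : f(x) ∈ f(z) + γ d(x,z)H + D}. Then x ∈ S(x) for every x ∈ S, and if z ∈ S(x) then S(z) ⊆ S(x). -/
open Pointwise

/-- The set-valued map `S(x) = {z ∈ S : f(x) ∈ f(z) + γ d(x,z) H + D}`. -/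
def Ssec {X Y : Type*} [MetricSpace X] [AddCommGroup Y] [Module ℝ Y]
    (S : Set X) (D H : Set Y) (f : X → Y) (γ : ℝ) (x : X) : Set X :=
  {z ∈ S | f x ∈ {f z} + (γ * dist x z) • H + D}

/-!
`x ∈ S(x)` because `0 ∈ D`. For transitivity, chaining `z ∈ S(x)` and `w ∈ S(z)` puts `f x` in
`f w + γ d(x,z) H + γ d(z,w) H + D`. Convexity of `H + D` merges the two `H`-terms into
`γ (d(x,z) + d(z,w)) H + D`, and since `H ⊆ D` the surplus over `γ d(x,w)` given by the triangle
inequality is absorbed into the cone `D`.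
-/

open Set

section Cone

variable {Y : Type*} [AddCommGroup Y] [Module ℝ Y] {D H : Set Y}

lemma smul_set_subset_smul_set_add (hHD : H ⊆ D) (hDsmul : ∀ α : ℝ, 0 ≤ α → ∀ d ∈ D, α • d ∈ D)
    {s t : ℝ} (hts : t ≤ s) : s • H ⊆ t • H + D := by
  rintro _ ⟨h, hh, rfl⟩
  refine ⟨t • h, smul_mem_smul_set hh, (s - t) • h, hDsmul _ (sub_nonneg.2 hts) h (hHD hh), ?_⟩
  simp only [← add_smul, add_sub_cancel]

lemma smul_set_add_smul_set_subset (hconv : Convex ℝ (H + D)) (hD0 : (0 : Y) ∈ D)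
    (hDsmul : ∀ α : ℝ, 0 ≤ α → ∀ d ∈ D, α • d ∈ D) {a b : ℝ} (ha : 0 ≤ a) (hb : 0 ≤ b) :
    a • H + b • H ⊆ (a + b) • H + D :=
  calc a • H + b • H ⊆ a • (H + D) + b • (H + D) := by
        gcongr <;> exact subset_add_left H hD0
    _ = (a + b) • H + (a + b) • D := by rw [← hconv.add_smul ha hb, smul_add]
    _ ⊆ (a + b) • H + D := by
        gcongr
        exact smul_set_subset_iff.2 (hDsmul _ (add_nonneg ha hb))

end Cone

section Ssec

variable {X Y : Type*} [MetricSpace X] [AddCommGroup Y] [Module ℝ Y]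
  {S : Set X} {D H : Set Y} {f : X → Y} {γ : ℝ}

lemma self_mem_Ssec (hD0 : (0 : Y) ∈ D) (hH : H.Nonempty) {x : X} (hx : x ∈ S) :
    x ∈ Ssec S D H f γ x := by
  refine ⟨hx, ?_⟩
  rw [dist_self, mul_zero, zero_smul_set hH, add_zero]
  simpa using add_mem_add (mem_singleton (f x)) hD0

lemma Ssec_subset_Ssec_of_mem (hDadd : ∀ a ∈ D, ∀ b ∈ D, a + b ∈ D)
    (hDsmul : ∀ α : ℝ, 0 ≤ α → ∀ d ∈ D, α • d ∈ D) (hD0 : (0 : Y) ∈ D) (hHD : H ⊆ D)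
    (hconv : Convex ℝ (H + D)) (hγ : 0 ≤ γ) {x z : X} (hz : z ∈ Ssec S D H f γ x) :
    Ssec S D H f γ z ⊆ Ssec S D H f γ x := by
  rintro w ⟨hwS, hw⟩
  refine ⟨hwS, ?_⟩
  have hDD : D + D = D := (add_subset_iff.2 hDadd).antisymm (subset_add_left D hD0)
  have hmerge : (γ * dist x z) • H + (γ * dist z w) • H ⊆ (γ * dist x w) • H + D + D := by
    refine (smul_set_add_smul_set_subset hconv hD0 hDsmul (by positivity) (by positivity)).trans ?_
    rw [← mul_add]
    gcongr
    exact smul_set_subset_smul_set_add hHD hDsmul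
      (mul_le_mul_of_nonneg_left (dist_triangle x z w) hγ)
  refine mem_of_mem_of_subset hz.2 ?_
  calc {f z} + (γ * dist x z) • H + D
      ⊆ {f w} + (γ * dist z w) • H + D + (γ * dist x z) • H + D := by
        gcongr
        exact singleton_subset_iff.2 hw
    _ = {f w} + ((γ * dist x z) • H + (γ * dist z w) • H) + (D + D) := by abel
    _ ⊆ {f w} + ((γ * dist x w) • H + D + D) + D := by gcongr; exact hDD.subset
    _ = {f w} + (γ * dist x w) • H + (D + D + D) := by abel
    _ = {f w} + (γ * dist x w) • H + D := by rw [hDD, hDD]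

end Ssec

theorem Ssec_refl_and_trans_general {X Y : Type*} [MetricSpace X] [AddCommGroup Y] [Module ℝ Y]
    (S : Set X) (D H : Set Y)
    (hDadd : ∀ a ∈ D, ∀ b ∈ D, a + b ∈ D)
    (hDsmul : ∀ α : ℝ, 0 ≤ α → ∀ d ∈ D, α • d ∈ D)
    (hHne : H.Nonempty) (hHD : H ⊆ D) (hconv : Convex ℝ (H + D))
    (f : X → Y) (γ : ℝ) (hγ : 0 < γ) :
    (∀ x ∈ S, x ∈ Ssec S D H f γ x) ∧
    (∀ x ∈ S, ∀ z ∈ Ssec S D H f γ x, Ssec S D H f γ z ⊆ Ssec S D H f γ x) := by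
  obtain ⟨h, hh⟩ := hHne
  have hD0 : (0 : Y) ∈ D := by simpa using hDsmul 0 le_rfl h (hHD hh)
  exact ⟨fun x hx => self_mem_Ssec hD0 ⟨h, hh⟩ hx,
    fun _ _ _ hz => Ssec_subset_Ssec_of_mem hDadd hDsmul hD0 hHD hconv hγ.le hz⟩

theorem Ssec_refl_and_trans {X Y : Type*} [MetricSpace X] [AddCommGroup Y] [Module ℝ Y]
    (S : Set X) (hS : S.Nonempty) (D H : Set Y)
    (hDadd : ∀ a ∈ D, ∀ b ∈ D, a + b ∈ D)
    (hDsmul : ∀ α : ℝ, 0 ≤ α → ∀ d ∈ D, α • d ∈ D)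
    (hHne : H.Nonempty) (hHD : H ⊆ D) (hconv : Convex ℝ (H + D))
    (f : X → Y) (γ : ℝ) (hγ : 0 < γ) :
    (∀ x ∈ S, x ∈ Ssec S D H f γ x) ∧
    (∀ x ∈ S, ∀ z ∈ Ssec S D H f γ x, Ssec S D H f γ z ⊆ Ssec S D H f γ x) :=
  Ssec_refl_and_trans_general S D H hDadd hDsmul hHne hHD hconv f γ hγ
end

section
/- Let (X,d) be a metric space, Y a real vector space, D a convex cone, H ⊂ D a D-convex set with 0 ∉ H + D, γ > 0, and f : X → Y. Define x' ⪯ x on X by f(x) ∈ f(x') + γ d(x,x')H + D. Then ⪯ is a partial order on X (reflexive, transitive, and antisymmetric). -/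
open Pointwise

theorem perturbed_relation_partialOrder {X Y : Type*} [MetricSpace X]
    [AddCommGroup Y] [Module ℝ Y] (D H : Set Y)
    (hDadd : ∀ a ∈ D, ∀ b ∈ D, a + b ∈ D)
    (hDsmul : ∀ α : ℝ, 0 ≤ α → ∀ d ∈ D, α • d ∈ D)
    (hHne : H.Nonempty) (hHD : H ⊆ D) (hconv : Convex ℝ (H + D))
    (h0 : (0 : Y) ∉ H + D)
    (f : X → Y) (γ : ℝ) (hγ : 0 < γ)
    (r : X → X → Prop)
    (hr : ∀ x' x : X, r x' x ↔ f x ∈ {f x'} + (γ * dist x x') • H + D) :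
    (∀ x, r x x) ∧ (∀ x y z, r x y → r y z → r x z) ∧
      (∀ x y, r x y → r y x → x = y) := by
  obtain ⟨h₀, hh₀⟩ := hHne
  have h0D : (0 : Y) ∈ D := by simpa using hDsmul 0 le_rfl h₀ (hHD hh₀)
  have hmem : ∀ (a b : Y) (c : ℝ),
      a ∈ ({b} : Set Y) + c • H + D ↔ ∃ h ∈ H, ∃ d ∈ D, a = b + c • h + d := by
    intro a b c
    simp only [Set.mem_add, Set.mem_smul_set, Set.mem_singleton_iff]
    constructor
    · rintro ⟨_, ⟨u, rfl, _, ⟨h, hh, rfl⟩, rfl⟩, d, hd, rfl⟩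
      exact ⟨h, hh, d, hd, rfl⟩
    · rintro ⟨h, hh, d, hd, rfl⟩
      exact ⟨_, ⟨_, rfl, _, ⟨h, hh, rfl⟩, rfl⟩, d, hd, rfl⟩
  have hHsub : ∀ h ∈ H, h ∈ H + D := by
    intro h hh
    have := Set.add_mem_add hh h0D
    simpa using this
  refine ⟨?_, ?_, ?_⟩
  · intro x
    rw [hr, hmem]
    exact ⟨h₀, hh₀, 0, h0D, by simp⟩
  · intro x y z hxy hyz
    rw [hr, hmem] at hxy hyz ⊢
    obtain ⟨h1, hh1, d1, hd1, hy⟩ := hxy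
    obtain ⟨h2, hh2, d2, hd2, hz⟩ := hyz
    set s := dist y x with hs
    set t := dist z y with ht
    set u := dist z x with hu
    have hsn : 0 ≤ s := dist_nonneg
    have htn : 0 ≤ t := dist_nonneg
    have hun : 0 ≤ u := dist_nonneg
    have htri : u ≤ t + s := dist_triangle z y x
    rcases eq_or_lt_of_le (add_nonneg hsn htn) with hst | hst
    · -- s + t = 0, so s = t = u = 0
      have hs0 : s = 0 := le_antisymm (by linarith) hsn
      have ht0 : t = 0 := le_antisymm (by linarith) htn
      have hu0 : u = 0 := le_antisymm (by simpa [hs0, ht0] using htri) hun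
      refine ⟨h1, hh1, d1 + d2, hDadd _ hd1 _ hd2, ?_⟩
      rw [hz, hy]
      rw [hu0, hs0, ht0]
      module
    · have hst' : s + t ≠ 0 := ne_of_gt hst
      have hlam : (0:ℝ) ≤ s / (s + t) := div_nonneg hsn (le_of_lt hst)
      have hmu : (0:ℝ) ≤ t / (s + t) := div_nonneg htn (le_of_lt hst)
      have hsum : s / (s + t) + t / (s + t) = 1 := by field_simp
      obtain ⟨h, hh, d3, hd3, hcomb⟩ :=
        hconv (hHsub h1 hh1) (hHsub h2 hh2) hlam hmu hsum
      have key : (γ*s)•h1 + (γ*t)•h2 = (γ*(s+t))•h + (γ*(s+t))•d3 := by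
        have hc := congrArg (fun v => (γ*(s+t)) • v) hcomb.symm
        simp only [smul_add, smul_smul] at hc
        have e1 : γ*(s+t) * (s/(s+t)) = γ*s := by field_simp
        have e2 : γ*(s+t) * (t/(s+t)) = γ*t := by field_simp
        rw [e1, e2] at hc
        exact hc
      refine ⟨h, hh, (γ*(s+t-u))•h + ((γ*(s+t))•d3 + (d1 + d2)), ?_, ?_⟩
      · refine hDadd _ (hDsmul _ ?_ _ (hHD hh)) _
          (hDadd _ (hDsmul _ ?_ _ hd3) _ (hDadd _ hd1 _ hd2))
        · nlinarith
        · positivity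
      · rw [hz, hy]
        linear_combination (norm := module) key
  · intro x y hxy hyx
    by_contra hne
    rw [hr, hmem] at hxy hyx
    obtain ⟨h1, hh1, d1, hd1, hy⟩ := hxy
    obtain ⟨h2, hh2, d2, hd2, hx⟩ := hyx
    have hd : dist x y = dist y x := dist_comm x y
    set dd := dist y x with hdd
    have hdpos : 0 < dd := dist_pos.mpr (fun h => hne h.symm)
    rw [hd] at hx
    -- add the two equations: 0 = (γ*dd)•h1 + (γ*dd)•h2 + d1 + d2
    have hzero : (0:Y) = (γ*dd)•h1 + (γ*dd)•h2 + (d1 + d2) := by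
      have := hx
      rw [hy] at this
      linear_combination (norm := module) this
    obtain ⟨h, hh, d3, hd3, hcomb⟩ :=
      hconv (hHsub h1 hh1) (hHsub h2 hh2) (by norm_num : (0:ℝ) ≤ 1/2)
        (by norm_num : (0:ℝ) ≤ 1/2) (by norm_num)
    set c := 2*γ*dd with hc
    have hcpos : 0 < c := by positivity
    have key : (γ*dd)•h1 + (γ*dd)•h2 = c•h + c•d3 := by
      have hc2 := congrArg (fun v => c • v) hcomb.symm
      simp only [smul_add, smul_smul] at hc2
      have e1 : c * (1/2) = γ*dd := by rw [hc]; ring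
      rw [e1] at hc2
      exact hc2
    have hzero2 : (0:Y) = c•h + (c•d3 + (d1 + d2)) := by
      rw [hzero, key]; module
    have hw : c•d3 + (d1 + d2) ∈ D :=
      hDadd _ (hDsmul _ (le_of_lt hcpos) _ hd3) _ (hDadd _ hd1 _ hd2)
    have heq : h + (1/c)•(c•d3 + (d1 + d2)) = 0 := by
      have h1c : (1/c) * c = 1 := one_div_mul_cancel (ne_of_gt hcpos)
      calc h + (1/c)•(c•d3 + (d1 + d2))
          = (1/c)•(c•h + (c•d3 + (d1 + d2))) := by
            simp only [smul_add, smul_smul, h1c, one_smul]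
        _ = 0 := by rw [← hzero2, smul_zero]
    have hmem0 : h + (1/c)•(c•d3 + (d1 + d2)) ∈ H + D :=
      Set.add_mem_add hh (hDsmul _ (le_of_lt (by positivity : (0:ℝ) < 1/c)) _ hw)
    rw [heq] at hmem0
    exact h0 hmem0
end

section
/- Let (X,d) be a complete metric space, S ⊆ X nonempty closed, Y a real topological vector space, D a convex cone, H ⊂ D a D-convex set with 0 ∉ vcl(H+D) and such that H + D is h₀-closed for some h₀ ∈ H. Assume f : X → Y is submonotone with respect to D. If x₀ ∈ S satisfies f(x₀) ∉ f(S) + εH + D for some ε > 0, then for any γ > 0 there exists x̂ ∈ S such that: (a) f(x₀) ∈ f(x̂) + γ d(x₀,x̂)H + D; (b) d(x₀,x̂) < ε/γ; (c) for all x ∈ S\{x̂}, f(x̂) ∉ f(x) + γ d(x̂,x)H + D. -/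
/-!
Ekeland's iteration for the preorder `x' ∈ S(x)` iff `x' ∈ S` and
`f x ∈ f x' + γ d(x, x') H + D`, which is transitive because `H + D` is convex.
Starting at `x₀`, choose `xₙ₊₁ ∈ S(xₙ)` at more than half the radius of `S(xₙ)` around `xₙ`.
Chaining the steps gives `f x₀ ∈ f xₙ + γ (∑ d(xᵢ, xᵢ₊₁)) H + D`, and the choice of `x₀` bounds
this sum by `ε / γ`, so `(xₙ)` is Cauchy with a limit `x̂ ∈ S`. Submonotonicity gives
`f x̂ ≤_D f xₙ`, so `f xₙ ∈ f x̂ + c H + D` for every `c < γ d(xₙ, x̂)`, and `h₀`-closedness of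
`H + D` lets `c` reach `γ d(xₙ, x̂)`: `x̂ ∈ S(xₙ)` for all `n`. A point of `S(x̂)` then lies in
every `S(xₙ)`, whose radii tend to `0`, so it is `x̂`.
-/

open Filter Topology Pointwise

/-- The `v₀`-vector closure of a set. -/
def vclv {Y : Type*} [AddCommGroup Y] [Module ℝ Y] (v₀ : Y) (A : Set Y) : Set Y :=
  {y | ∃ l : ℕ → ℝ, (∀ n, 0 ≤ l n) ∧ Tendsto l atTop (nhds 0) ∧
    ∀ n, y + l n • v₀ ∈ A}

/-- `f` is submonotone (D-sequentially lower monotone). -/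
def Submonotone {X Y : Type*} [MetricSpace X] [AddCommGroup Y] [Module ℝ Y]
    (D : Set Y) (f : X → Y) : Prop :=
  ∀ (x : X) (seq : ℕ → X), Tendsto seq atTop (nhds x) →
    (∀ m n : ℕ, n < m → f (seq m) - f (seq n) ∈ -D) →
    ∀ n, f x - f (seq n) ∈ -D

namespace VectorEVP

section ConeAlgebra

variable {Y : Type*} [AddCommGroup Y] [Module ℝ Y] (C : PointedCone ℝ Y) {H : Set Y}

lemma smul_add_cone_eq {c : ℝ} (hc : 0 ≤ c) : c • H + C = c • (H + C) + C := by
  apply subset_antisymm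
  · rintro _ ⟨_, ⟨h, hh, rfl⟩, d, hd, rfl⟩
    exact ⟨c • (h + 0), ⟨h + 0, Set.add_mem_add hh C.zero_mem, rfl⟩, d, hd, by simp⟩
  · rintro _ ⟨_, ⟨_, ⟨h, hh, d', hd', rfl⟩, rfl⟩, d, hd, rfl⟩
    exact ⟨c • h, ⟨h, hh, rfl⟩, c • d' + d, C.add_mem (C.smul_mem hc hd') hd, by
      simp only [smul_add, add_assoc]⟩

lemma smul_add_cone_subset_cone (hHC : H ⊆ C) {c : ℝ} (hc : 0 ≤ c) : c • H + C ⊆ C := by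
  rintro _ ⟨_, ⟨h, hh, rfl⟩, d, hd, rfl⟩
  exact C.add_mem (C.smul_mem hc (hHC hh)) hd

lemma smul_add_cone_antitone (hHC : H ⊆ C) {c c' : ℝ} (hcc' : c' ≤ c) :
    c • H + C ⊆ c' • H + C := by
  rintro _ ⟨_, ⟨h, hh, rfl⟩, d, hd, rfl⟩
  refine ⟨c' • h, ⟨h, hh, rfl⟩, (c - c') • h + d,
    C.add_mem (C.smul_mem (sub_nonneg.2 hcc') (hHC hh)) hd, ?_⟩
  simp only [sub_smul]
  abel

lemma cone_add_cone_subset : (C : Set Y) + C ⊆ C := by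
  rintro _ ⟨a, ha, b, hb, rfl⟩
  exact C.add_mem ha hb

lemma add_cone_add_cone_subset (A : Set Y) : A + C + C ⊆ A + C := by
  rw [add_assoc]
  exact Set.add_subset_add_left (cone_add_cone_subset C)

lemma smul_add_cone_add_subset (hconv : Convex ℝ (H + (C : Set Y))) {a b : ℝ} (ha : 0 ≤ a)
    (hb : 0 ≤ b) :
    (a • H + C) + (b • H + C) ⊆ (a + b) • H + C := by
  rw [smul_add_cone_eq C ha, smul_add_cone_eq C hb, smul_add_cone_eq C (add_nonneg ha hb),
    add_add_add_comm, ← hconv.add_smul ha hb]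
  exact Set.add_subset_add_left (cone_add_cone_subset C)

lemma zero_smul_add_cone (hH : H.Nonempty) : (0 : ℝ) • H + C = C := by
  rw [Set.zero_smul_set hH, zero_add]

lemma mem_smul_add_cone_of_forall_lt (hconv : Convex ℝ (H + (C : Set Y))) {h₀ : Y}
    (hh₀ : h₀ ∈ H) (hclosed : vclv h₀ (H + C) = H + C) {c : ℝ} (hc : 0 < c) {y : Y}
    (hy : ∀ c', 0 ≤ c' → c' < c → y ∈ c' • H + C) : y ∈ c • H + C := by
  set K := H + (C : Set Y)
  have hw : c⁻¹ • y ∈ K := by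
    rw [← hclosed]
    refine ⟨fun n => 1 / (n + 1), fun n => by positivity, tendsto_one_div_add_atTop_nhds_zero_nat,
      fun n => ?_⟩
    set s : ℝ := 1 / (n + 1)
    have hs : 0 < s := by positivity
    have hs1 : s ≤ 1 := div_le_one_of_le₀ (by simp) (by positivity)
    have hy' : y ∈ (c * (1 - s)) • K + C := by
      rw [← smul_add_cone_eq C (by nlinarith)]
      exact hy _ (by nlinarith) (by nlinarith)
    have hw' : c⁻¹ • y ∈ (1 - s) • K + C := by
      obtain ⟨_, ⟨k, hk, rfl⟩, d, hd, rfl⟩ := hy'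
      refine ⟨(1 - s) • k, Set.smul_mem_smul_set hk, c⁻¹ • d,
        C.smul_mem (inv_nonneg.2 hc.le) hd, ?_⟩
      rw [smul_add, smul_smul, inv_mul_cancel_left₀ hc.ne']
    -- `(1 - s) • K + s • K = K` by convexity, so `c⁻¹ • y` is an `h₀`-limit point of `K`
    have hsum := Set.add_mem_add hw'
      (Set.smul_mem_smul_set (a := s) (Set.add_mem_add hh₀ C.zero_mem))
    rw [add_right_comm, ← hconv.add_smul (by linarith) hs.le, sub_add_cancel, one_smul,
      add_zero] at hsum
    exact add_cone_add_cone_subset C H hsum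
  rw [smul_add_cone_eq C hc.le]
  exact ⟨c • c⁻¹ • y, Set.smul_mem_smul_set hw, 0, C.zero_mem,
    (add_zero _).trans (smul_inv_smul₀ hc.ne' y)⟩

end ConeAlgebra

lemma mem_singleton_add_add_iff {Y : Type*} [AddCommGroup Y] {a y : Y} {s t : Set Y} :
    y ∈ {a} + s + t ↔ y - a ∈ s + t := by
  rw [add_assoc, Set.singleton_add, Set.mem_image]
  constructor
  · rintro ⟨z, hz, rfl⟩
    rwa [add_sub_cancel_left]
  · exact fun h => ⟨y - a, h, add_sub_cancel a y⟩

lemma exists_mem_forall_dist_le_two_mul_dist {X : Type*} [PseudoMetricSpace X] (x : X)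
    {A : Set X} (hne : A.Nonempty) (hA : Bornology.IsBounded A) :
    ∃ q ∈ A, ∀ z ∈ A, dist x z ≤ 2 * dist x q := by
  obtain ⟨r, hr⟩ := (Metric.isBounded_iff_subset_closedBall x).1 hA
  have hbdd : BddAbove (dist x '' A) := ⟨r, by
    rintro _ ⟨z, hz, rfl⟩
    exact Metric.mem_closedBall'.1 (hr hz)⟩
  have hle : ∀ z ∈ A, dist x z ≤ sSup (dist x '' A) := fun z hz =>
    le_csSup hbdd (Set.mem_image_of_mem _ hz)
  rcases le_or_gt (sSup (dist x '' A)) 0 with hsup | hsup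
  · obtain ⟨q, hq⟩ := hne
    exact ⟨q, hq, fun z hz => (hle z hz).trans (hsup.trans (by positivity))⟩
  · obtain ⟨_, ⟨q, hq, rfl⟩, hlt⟩ := exists_lt_of_lt_csSup (hne.image _) (half_lt_self hsup)
    exact ⟨q, hq, fun z hz => by linarith [hle z hz]⟩

lemma lt_of_sub_mem_smul_add_cone {X Y : Type*} [AddCommGroup Y] [Module ℝ Y] {S : Set X}
    {H : Set Y} {C : PointedCone ℝ Y} {f : X → Y} {ε : ℝ} {x₀ : X}
    (heff : f x₀ ∉ f '' S + ε • H + C) (hHC : H ⊆ C) {x : X} (hx : x ∈ S) {c : ℝ}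
    (hc : f x₀ - f x ∈ c • H + C) : c < ε := by
  by_contra! hle
  obtain ⟨_, ⟨h, hh, rfl⟩, d, hd, heq⟩ := smul_add_cone_antitone C hHC hle hc
  exact heff ⟨f x + ε • h, Set.add_mem_add (Set.mem_image_of_mem f hx) (Set.smul_mem_smul_set hh),
    d, hd, by simp only at heq ⊢; rw [add_assoc, heq, add_sub_cancel]⟩

section LowerSection

variable {X Y : Type*} [MetricSpace X] [AddCommGroup Y] [Module ℝ Y]
  {S : Set X} {H : Set Y} {C : PointedCone ℝ Y} {f : X → Y} {γ : ℝ}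

def lowerSection (S : Set X) (H : Set Y) (C : PointedCone ℝ Y) (f : X → Y) (γ : ℝ) (x : X) :
    Set X :=
  {x' | x' ∈ S ∧ f x - f x' ∈ (γ * dist x x') • H + C}

lemma self_mem_lowerSection (hH : H.Nonempty) {x : X} (hx : x ∈ S) :
    x ∈ lowerSection S H C f γ x :=
  ⟨hx, by rw [dist_self, mul_zero, zero_smul_add_cone C hH, sub_self]; exact C.zero_mem⟩

lemma lowerSection_subset (hconv : Convex ℝ (H + (C : Set Y))) (hHC : H ⊆ C) (hγ : 0 ≤ γ)
    {x x' : X} (hx' : x' ∈ lowerSection S H C f γ x) :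
    lowerSection S H C f γ x' ⊆ lowerSection S H C f γ x := by
  rintro x'' ⟨hx''S, hx''⟩
  have hsum := smul_add_cone_add_subset C hconv (by positivity) (by positivity)
    (Set.add_mem_add hx'.2 hx'')
  rw [sub_add_sub_cancel, ← mul_add] at hsum
  exact ⟨hx''S, smul_add_cone_antitone C hHC
    (mul_le_mul_of_nonneg_left (dist_triangle x x' x'') hγ) hsum⟩

lemma sub_mem_cone_of_mem_lowerSection (hHC : H ⊆ C) (hγ : 0 ≤ γ) {x x' : X}
    (hx' : x' ∈ lowerSection S H C f γ x) : f x - f x' ∈ C :=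
  smul_add_cone_subset_cone C hHC (by positivity) hx'.2

lemma dist_lt_of_mem_lowerSection {ε : ℝ} {x₀ : X} (heff : f x₀ ∉ f '' S + ε • H + C)
    (hHC : H ⊆ C) (hγ : 0 < γ) {x : X} (hx : x ∈ lowerSection S H C f γ x₀) :
    dist x₀ x < ε / γ := by
  rw [lt_div_iff₀' hγ]
  exact lt_of_sub_mem_smul_add_cone heff hHC hx.1 hx.2

lemma exists_seq_mem_lowerSection (hH : H.Nonempty) (hconv : Convex ℝ (H + (C : Set Y)))
    (hHC : H ⊆ C) (hγ : 0 ≤ γ) {x₀ : X} (hx₀ : x₀ ∈ S)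
    (hbdd : Bornology.IsBounded (lowerSection S H C f γ x₀)) :
    ∃ xs : ℕ → X, xs 0 = x₀ ∧ (∀ n, xs (n + 1) ∈ lowerSection S H C f γ (xs n)) ∧
      ∀ n, ∀ z ∈ lowerSection S H C f γ (xs n), dist (xs n) z ≤ 2 * dist (xs n) (xs (n + 1)) := by
  have hnext : ∀ x ∈ lowerSection S H C f γ x₀, ∃ q ∈ lowerSection S H C f γ x,
      ∀ z ∈ lowerSection S H C f γ x, dist x z ≤ 2 * dist x q := fun x hx =>
    exists_mem_forall_dist_le_two_mul_dist x ⟨x, self_mem_lowerSection hH hx.1⟩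
      (hbdd.subset (lowerSection_subset hconv hHC hγ hx))
  choose! next hnext_mem hnext_far using hnext
  have hmem : ∀ n, next^[n] x₀ ∈ lowerSection S H C f γ x₀ := by
    intro n
    induction n with
    | zero => exact self_mem_lowerSection hH hx₀
    | succ n ih =>
      rw [Function.iterate_succ_apply']
      exact lowerSection_subset hconv hHC hγ ih (hnext_mem _ ih)
  refine ⟨fun n => next^[n] x₀, rfl, fun n => ?_, fun n => ?_⟩ <;>
    simp only [Function.iterate_succ_apply']
  exacts [hnext_mem _ (hmem n), hnext_far _ (hmem n)]

variable {xs : ℕ → X}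

lemma mem_lowerSection_of_lt (hconv : Convex ℝ (H + (C : Set Y))) (hHC : H ⊆ C) (hγ : 0 ≤ γ)
    (hstep : ∀ n, xs (n + 1) ∈ lowerSection S H C f γ (xs n)) {n m : ℕ} (hnm : n < m) :
    xs m ∈ lowerSection S H C f γ (xs n) := by
  induction m, hnm using Nat.le_induction with
  | base => exact hstep n
  | succ m _ ih => exact lowerSection_subset hconv hHC hγ ih (hstep m)

lemma sub_mem_smul_sum_dist_add_cone (hH : H.Nonempty) (hconv : Convex ℝ (H + (C : Set Y)))
    (hγ : 0 ≤ γ) (hstep : ∀ n, xs (n + 1) ∈ lowerSection S H C f γ (xs n)) (N : ℕ) :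
    f (xs 0) - f (xs N) ∈ (γ * ∑ i ∈ Finset.range N, dist (xs i) (xs (i + 1))) • H + C := by
  induction N with
  | zero =>
    rw [Finset.sum_range_zero, mul_zero, zero_smul_add_cone C hH, sub_self]
    exact C.zero_mem
  | succ N ih =>
    have hsum := smul_add_cone_add_subset C hconv (by positivity) (by positivity)
      (Set.add_mem_add ih (hstep N).2)
    rwa [sub_add_sub_cancel, ← mul_add, ← Finset.sum_range_succ] at hsum

lemma summable_dist_succ {ε : ℝ} (heff : f (xs 0) ∉ f '' S + ε • H + C) (hH : H.Nonempty)
    (hconv : Convex ℝ (H + (C : Set Y))) (hHC : H ⊆ C) (hγ : 0 < γ) (hS : ∀ n, xs n ∈ S)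
    (hstep : ∀ n, xs (n + 1) ∈ lowerSection S H C f γ (xs n)) :
    Summable fun n => dist (xs n) (xs (n + 1)) := by
  refine summable_of_sum_range_le (c := ε / γ) (fun _ => dist_nonneg) fun N => ?_
  rw [le_div_iff₀' hγ]
  exact (lt_of_sub_mem_smul_add_cone heff hHC (hS N)
    (sub_mem_smul_sum_dist_add_cone hH hconv hγ.le hstep N)).le

lemma mem_lowerSection_of_tendsto (hconv : Convex ℝ (H + (C : Set Y))) (hHC : H ⊆ C) {h₀ : Y}
    (hh₀ : h₀ ∈ H) (hclosed : vclv h₀ (H + C) = H + C) (hsub : Submonotone (C : Set Y) f)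
    (hγ : 0 < γ) (hstep : ∀ n, xs (n + 1) ∈ lowerSection S H C f γ (xs n)) {xhat : X}
    (hxhat : xhat ∈ S) (hlim : Tendsto xs atTop (𝓝 xhat)) (n : ℕ) :
    xhat ∈ lowerSection S H C f γ (xs n) := by
  have hchain {n m : ℕ} (hnm : n < m) := mem_lowerSection_of_lt hconv hHC hγ.le hstep hnm
  have hbelow (m : ℕ) : f (xs m) - f xhat ∈ C := by
    have := hsub xhat xs hlim (fun m n hnm => by
      rw [Set.mem_neg, neg_sub]
      exact sub_mem_cone_of_mem_lowerSection hHC hγ.le (hchain hnm)) m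
    rwa [Set.mem_neg, neg_sub] at this
  refine ⟨hxhat, ?_⟩
  rcases (dist_nonneg (x := xs n) (y := xhat)).eq_or_lt with ht | ht
  · rw [← ht, mul_zero, zero_smul_add_cone C ⟨h₀, hh₀⟩]
    exact hbelow n
  refine mem_smul_add_cone_of_forall_lt C hconv hh₀ hclosed (mul_pos hγ ht) fun c _ hc => ?_
  have hfar : ∀ᶠ m in atTop, c < γ * dist (xs n) (xs m) :=
    ((tendsto_const_nhds.dist hlim).const_mul γ).eventually (lt_mem_nhds hc)
  obtain ⟨m, hcm, hnm⟩ := (hfar.and (eventually_gt_atTop n)).exists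
  have hsum := add_cone_add_cone_subset C _ (Set.add_mem_add (hchain hnm).2 (hbelow m))
  rw [sub_add_sub_cancel] at hsum
  exact smul_add_cone_antitone C hHC hcm.le hsum

lemma eq_of_mem_lowerSection_of_tendsto (hconv : Convex ℝ (H + (C : Set Y))) (hHC : H ⊆ C)
    (hγ : 0 ≤ γ) (hfar : ∀ n, ∀ z ∈ lowerSection S H C f γ (xs n),
      dist (xs n) z ≤ 2 * dist (xs n) (xs (n + 1)))
    (hstep0 : Tendsto (fun n => dist (xs n) (xs (n + 1))) atTop (𝓝 0)) {xhat : X}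
    (hxhat : ∀ n, xhat ∈ lowerSection S H C f γ (xs n)) (hlim : Tendsto xs atTop (𝓝 xhat))
    {z : X} (hz : z ∈ lowerSection S H C f γ xhat) : z = xhat := by
  have hz_lim : Tendsto xs atTop (𝓝 z) := by
    refine tendsto_iff_dist_tendsto_zero.2 (squeeze_zero (fun _ => dist_nonneg)
      (fun n => hfar n z (lowerSection_subset hconv hHC hγ (hxhat n) hz)) ?_)
    simpa using hstep0.const_mul 2
  exact tendsto_nhds_unique hz_lim hlim

end LowerSection
end VectorEVP

open VectorEVP in
theorem EVP_Nemeth_h0closed_general {X Y : Type*} [MetricSpace X] [CompleteSpace X]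
    [AddCommGroup Y] [Module ℝ Y]
    (S : Set X) (hScl : IsClosed S)
    (D H : Set Y)
    (hDadd : ∀ a ∈ D, ∀ b ∈ D, a + b ∈ D)
    (hDsmul : ∀ α : ℝ, 0 ≤ α → ∀ d ∈ D, α • d ∈ D)
    (hHD : H ⊆ D) (hconv : Convex ℝ (H + D))
    (h₀ : Y) (hh₀ : h₀ ∈ H) (hclosed : vclv h₀ (H + D) = H + D)
    (f : X → Y) (hsub : Submonotone D f)
    (γ ε : ℝ) (hγ : 0 < γ)
    (x₀ : X) (hx₀ : x₀ ∈ S)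
    (heff : f x₀ ∉ f '' S + ε • H + D) :
    ∃ xhat ∈ S,
      f x₀ ∈ {f xhat} + (γ * dist x₀ xhat) • H + D ∧
      dist x₀ xhat < ε / γ ∧
      ∀ x ∈ S, x ≠ xhat → f xhat ∉ {f x} + (γ * dist xhat x) • H + D := by
  obtain ⟨C, rfl⟩ : ∃ C : PointedCone ℝ Y, (C : Set Y) = D :=
    ⟨{ carrier := D
       add_mem' := fun ha hb => hDadd _ ha _ hb
       zero_mem' := by simpa using hDsmul 0 le_rfl h₀ (hHD hh₀)
       smul_mem' := fun c _ hd => hDsmul c c.2 _ hd }, rfl⟩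
  have hH : H.Nonempty := ⟨h₀, hh₀⟩
  have hdist {x : X} (hx : x ∈ lowerSection S H C f γ x₀) : dist x₀ x < ε / γ :=
    dist_lt_of_mem_lowerSection heff hHD hγ hx
  obtain ⟨xs, rfl, hstep, hfar⟩ := exists_seq_mem_lowerSection hH hconv hHD hγ.le hx₀
    (Metric.isBounded_ball.subset fun x hx => Metric.mem_ball'.2 (hdist hx))
  have hS : ∀ n, xs n ∈ S
    | 0 => hx₀
    | n + 1 => (hstep n).1
  have hsum := summable_dist_succ heff hH hconv hHD hγ hS hstep
  obtain ⟨xhat, hlim⟩ := cauchySeq_tendsto_of_complete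
    (cauchySeq_of_dist_le_of_summable _ (fun _ => le_rfl) hsum)
  have hxhat := mem_lowerSection_of_tendsto hconv hHD hh₀ hclosed hsub hγ hstep
    (hScl.mem_of_tendsto hlim (Eventually.of_forall hS)) hlim
  refine ⟨xhat, (hxhat 0).1, mem_singleton_add_add_iff.2 (hxhat 0).2, hdist (hxhat 0),
    fun x hx hne hmem => hne ?_⟩
  exact eq_of_mem_lowerSection_of_tendsto hconv hHD hγ.le hfar hsum.tendsto_atTop_zero hxhat hlim
    ⟨hx, mem_singleton_add_add_iff.1 hmem⟩

theorem EVP_Nemeth_h0closed {X Y : Type*} [MetricSpace X] [CompleteSpace X]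
    [AddCommGroup Y] [Module ℝ Y] [TopologicalSpace Y] [IsTopologicalAddGroup Y]
    [ContinuousSMul ℝ Y]
    (S : Set X) (hSne : S.Nonempty) (hScl : IsClosed S)
    (D H : Set Y)
    (hDadd : ∀ a ∈ D, ∀ b ∈ D, a + b ∈ D)
    (hDsmul : ∀ α : ℝ, 0 ≤ α → ∀ d ∈ D, α • d ∈ D)
    (hHD : H ⊆ D) (hconv : Convex ℝ (H + D))
    (h0 : (0 : Y) ∉ vcl (H + D))
    (h₀ : Y) (hh₀ : h₀ ∈ H) (hclosed : vclv h₀ (H + D) = H + D)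
    (f : X → Y) (hsub : Submonotone D f)
    (γ ε : ℝ) (hγ : 0 < γ) (hε : 0 < ε)
    (x₀ : X) (hx₀ : x₀ ∈ S)
    (heff : f x₀ ∉ f '' S + ε • H + D) :
    ∃ xhat ∈ S,
      f x₀ ∈ {f xhat} + (γ * dist x₀ xhat) • H + D ∧
      dist x₀ xhat < ε / γ ∧
      ∀ x ∈ S, x ≠ xhat → f xhat ∉ {f x} + (γ * dist xhat x) • H + D :=
  EVP_Nemeth_h0closed_general S hScl D H hDadd hDsmul hHD hconv h₀ hh₀ hclosed f hsub γ ε hγ x₀ hx₀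
    heff
end

section
/- Let Y be a locally convex Hausdorff topological vector space, D ⊂ Y a closed convex cone satisfying D = D^{++} (it equals its double polar), and H ⊂ D\(−D) a D-convex set that is countably compact in the topology σ(Y, D⁺) generated by the seminorms p_ξ(y) = |ξ(y)|, ξ ∈ D⁺. Then H + D is vectorially closed, i.e., vcl(H + D) = H + D. -/
open Filter Topology Pointwise

/-!
If `y + lₙ v = hₙ + dₙ` with `hₙ ∈ H`, `dₙ ∈ D` and `lₙ → 0`, let `h'` be a `σ(Y, D⁺)`-cluster
point of `(hₙ)` in `H`. For `ξ ∈ D⁺` we get `ξ hₙ ≤ ξ y + lₙ ξ v`, and passing to the cluster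
point gives `ξ h' ≤ ξ y`. Since `D = D⁺⁺`, this says `y - h' ∈ D`, so `y = h' + (y - h') ∈ H + D`.
-/

theorem subset_vcl {Y : Type*} [AddCommGroup Y] [Module ℝ Y] (A : Set Y) : A ⊆ vcl A :=
  fun _ hy => ⟨0, 0, fun _ => le_rfl, tendsto_const_nhds, fun _ => by simpa using hy⟩

theorem Real.mapClusterPt_atTop_iff {u : ℕ → ℝ} {x : ℝ} :
    MapClusterPt x atTop u ↔ ∀ ε > 0, ∀ N, ∃ n ≥ N, |u n - x| < ε := by
  simp only [Metric.nhds_basis_ball.mapClusterPt_iff_frequently, frequently_atTop,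
    Metric.mem_ball, Real.dist_eq]

theorem le_of_mapClusterPt_of_le_add {u e : ℕ → ℝ} {x c : ℝ} (hx : MapClusterPt x atTop u)
    (he : Tendsto e atTop (𝓝 0)) (hle : ∀ n, u n ≤ c + e n) : x ≤ c := by
  obtain ⟨ψ, hψ, hux⟩ := hx.tendsto_subseq
  have hce : Tendsto (fun n => c + e (ψ n)) atTop (𝓝 (c + 0)) :=
    tendsto_const_nhds.add (he.comp hψ.tendsto_atTop)
  simpa using le_of_tendsto_of_tendsto' hux hce fun n => hle (ψ n)

theorem sub_mem_of_forall_mapClusterPt_dual {Y : Type*} [AddCommGroup Y] [Module ℝ Y]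
    [TopologicalSpace Y] {D : Set Y}
    (hD : ∀ z : Y, (∀ ξ : Y →L[ℝ] ℝ, (∀ d ∈ D, 0 ≤ ξ d) → 0 ≤ ξ z) → z ∈ D)
    {h d : ℕ → Y} {l : ℕ → ℝ} {y v h' : Y} (hl : Tendsto l atTop (𝓝 0)) (hd : ∀ n, d n ∈ D)
    (heq : ∀ n, h n + d n = y + l n • v)
    (hclus : ∀ ξ : Y →L[ℝ] ℝ, (∀ d ∈ D, 0 ≤ ξ d) → MapClusterPt (ξ h') atTop (ξ ∘ h)) :
    y - h' ∈ D := by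
  refine hD _ fun ξ hξ => ?_
  have hle : ∀ n, ξ (h n) ≤ ξ y + l n * ξ v := fun n => by
    have := congrArg ξ (heq n)
    simp only [map_add, map_smul, smul_eq_mul] at this
    linarith [hξ _ (hd n)]
  have hlξ : Tendsto (fun n => l n * ξ v) atTop (𝓝 0) := by simpa using hl.mul_const (ξ v)
  simpa using le_of_mapClusterPt_of_le_add (hclus ξ hξ) hlξ hle

theorem HplusD_vectorially_closed_general {Y : Type*} [AddCommGroup Y] [Module ℝ Y]
    [TopologicalSpace Y]
    (D H : Set Y)
    (hbipolar : D = {y : Y | ∀ ξ : Y →L[ℝ] ℝ, (∀ d ∈ D, 0 ≤ ξ d) → 0 ≤ ξ y})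
    -- `H` is countably compact in the topology `σ(Y, D⁺)`:
    -- every sequence in `H` has a `σ(Y, D⁺)`-cluster point in `H`.
    (hcc : ∀ seq : ℕ → Y, (∀ n, seq n ∈ H) →
      ∃ h' ∈ H, ∀ s : Finset (Y →L[ℝ] ℝ), (∀ ξ ∈ s, ∀ d ∈ D, 0 ≤ ξ d) →
        ∀ ε : ℝ, 0 < ε → ∀ N : ℕ, ∃ n ≥ N, ∀ ξ ∈ s, |ξ (seq n) - ξ h'| < ε) :
    vcl (H + D) = H + D := by
  refine Set.Subset.antisymm ?_ (subset_vcl _)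
  rintro y ⟨v, l, -, hl, hmem⟩
  choose h hH d hD heq using hmem
  obtain ⟨h', hh', hclus⟩ := hcc h hH
  have hyh' : y - h' ∈ D :=
    sub_mem_of_forall_mapClusterPt_dual (fun z hz => hbipolar.ge hz) hl hD heq fun ξ hξ =>
      Real.mapClusterPt_atTop_iff.2 fun ε hε N => by simpa using hclus {ξ} (by simpa) ε hε N
  exact ⟨h', hh', y - h', hyh', add_sub_cancel _ _⟩

theorem HplusD_vectorially_closed {Y : Type*} [AddCommGroup Y] [Module ℝ Y]
    [TopologicalSpace Y] [IsTopologicalAddGroup Y] [ContinuousSMul ℝ Y]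
    [LocallyConvexSpace ℝ Y] [T2Space Y]
    (D H : Set Y)
    (hDcl : IsClosed D) (hDconv : Convex ℝ D)
    (hDcone : ∀ α : ℝ, 0 ≤ α → ∀ d ∈ D, α • d ∈ D)
    (hbipolar : D = {y : Y | ∀ ξ : Y →L[ℝ] ℝ, (∀ d ∈ D, 0 ≤ ξ d) → 0 ≤ ξ y})
    (hH : H ⊆ D \ (-D)) (hconv : Convex ℝ (H + D))
    -- `H` is countably compact in the topology `σ(Y, D⁺)`:
    -- every sequence in `H` has a `σ(Y, D⁺)`-cluster point in `H`.
    (hcc : ∀ seq : ℕ → Y, (∀ n, seq n ∈ H) →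
      ∃ h' ∈ H, ∀ s : Finset (Y →L[ℝ] ℝ), (∀ ξ ∈ s, ∀ d ∈ D, 0 ≤ ξ d) →
        ∀ ε : ℝ, 0 < ε → ∀ N : ℕ, ∃ n ≥ N, ∀ ξ ∈ s, |ξ (seq n) - ξ h'| < ε) :
    vcl (H + D) = H + D :=
  HplusD_vectorially_closed_general D H hbipolar hcc
end

section
/- In a topological vector space Y, every sequentially complete bounded convex set B is σ-convex: every convex series ∑ λₙ bₙ with bₙ ∈ B, λₙ ≥ 0, ∑ λₙ = 1, converges to a point of B. -/
open Filter Topology Pointwise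

/-- A set is σ-convex if every convex series of its points converges to a point of it. -/
def SigmaConvex {Y : Type*} [AddCommGroup Y] [Module ℝ Y] [TopologicalSpace Y]
    (B : Set Y) : Prop :=
  ∀ (b : ℕ → Y) (l : ℕ → ℝ), (∀ n, b n ∈ B) → (∀ n, 0 ≤ l n) →
    Tendsto (fun N => ∑ n ∈ Finset.range N, l n) atTop (nhds 1) →
    ∃ p ∈ B, Tendsto (fun N => ∑ n ∈ Finset.range N, l n • b n) atTop (nhds p)

/-! The partial sums `∑_{k<N} λₖ bₖ`, completed by the missing weight `1 - ∑_{k<N} λₖ` on `b₀`,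
are convex combinations of points of `B`. The difference of two of them is a tail
`∑_{m≤k<n} λₖ (bₖ - b₀)`, which lies in `(∑_{m≤k<n} λₖ) • (B - B)`; as `B - B` is bounded and the
tail weights tend to `0`, the completed sums form a Cauchy sequence in `B`. Its limit in `B` is
also the limit of the series, because the missing weight tends to `0`. -/

theorem Convex.sum_smul_mem_smul_set {𝕜 E ι : Type*} [Field 𝕜] [LinearOrder 𝕜]
    [IsStrictOrderedRing 𝕜] [AddCommGroup E] [Module 𝕜 E] {s : Set E} (hs : Convex 𝕜 s)
    (hne : s.Nonempty) {t : Finset ι} {w : ι → 𝕜} {z : ι → E} (hw : ∀ i ∈ t, 0 ≤ w i)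
    (hz : ∀ i ∈ t, z i ∈ s) : ∑ i ∈ t, w i • z i ∈ (∑ i ∈ t, w i) • s := by
  rcases (Finset.sum_nonneg hw).eq_or_lt with hzero | hpos
  · have hw0 : ∀ i ∈ t, w i = 0 := (Finset.sum_eq_zero_iff_of_nonneg hw).1 hzero.symm
    rw [← hzero, Set.zero_smul_set hne, Finset.sum_eq_zero fun i hi => by simp [hw0 i hi]]
    rfl
  · have hmass : t.centerMass w z ∈ s := hs.centerMass_mem hw hpos hz
    convert Set.smul_mem_smul_set (a := ∑ i ∈ t, w i) hmass using 1
    rw [Finset.centerMass, smul_inv_smul₀ hpos.ne']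

theorem Bornology.IsVonNBounded.cauchySeq_of_sub_mem_smul {𝕜 E ι : Type*} [NormedField 𝕜]
    [AddCommGroup E] [Module 𝕜 E] [UniformSpace E] [IsUniformAddGroup E] [Nonempty ι]
    [SemilatticeSup ι] {s : Set E} (hs : Bornology.IsVonNBounded 𝕜 s) {x : ι → E} {r : ι → 𝕜}
    (hr : CauchySeq r) (h : ∀ m n, x n - x m ∈ (r n - r m) • s) : CauchySeq x := by
  choose y hys hy using fun m n => Set.mem_smul_set.1 (h m n)
  rw [cauchySeq_iff_tendsto, uniformity_eq_comap_nhds_zero, tendsto_comap_iff] at hr ⊢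
  convert hs.smul_tendsto_zero (x := fun p : ι × ι => y p.1 p.2) (.of_forall fun p => hys _ _) hr
    using 1
  ext p
  exact (hy p.1 p.2).symm

section CompletedPartialSum

variable {Y : Type*} [AddCommGroup Y] [Module ℝ Y]

def completedPartialSum (b : ℕ → Y) (l : ℕ → ℝ) (N : ℕ) : Y :=
  b 0 + ∑ k ∈ Finset.range N, l k • (b k - b 0)

theorem completedPartialSum_eq (b : ℕ → Y) (l : ℕ → ℝ) (N : ℕ) :
    completedPartialSum b l N =
      ∑ k ∈ Finset.range N, l k • b k + (1 - ∑ k ∈ Finset.range N, l k) • b 0 := by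
  simp only [completedPartialSum, smul_sub, Finset.sum_sub_distrib, ← Finset.sum_smul]
  module

variable {B : Set Y} {b : ℕ → Y} {l : ℕ → ℝ}

theorem completedPartialSum_mem (hB : Convex ℝ B) (hb : ∀ n, b n ∈ B) (hl : ∀ n, 0 ≤ l n)
    {N : ℕ} (hN : ∑ k ∈ Finset.range N, l k ≤ 1) : completedPartialSum b l N ∈ B := by
  obtain ⟨y, hyB, hy⟩ := Set.mem_smul_set.1 <|
    hB.sum_smul_mem_smul_set ⟨b 0, hb 0⟩ (t := Finset.range N) (fun k _ => hl k) (fun k _ => hb k)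
  rw [completedPartialSum_eq, ← hy]
  exact hB hyB (hb 0) (Finset.sum_nonneg fun k _ => hl k) (sub_nonneg.2 hN) (by ring)

theorem completedPartialSum_sub_mem (hB : Convex ℝ B) (hb : ∀ n, b n ∈ B) (hl : ∀ n, 0 ≤ l n)
    (m n : ℕ) : completedPartialSum b l n - completedPartialSum b l m ∈
      (∑ k ∈ Finset.range n, l k - ∑ k ∈ Finset.range m, l k) • (B - B) := by
  wlog hmn : m ≤ n generalizing m n
  · have := Set.neg_mem_neg.2 (this n m (le_of_not_ge hmn))
    rwa [neg_sub, ← Set.neg_smul_set, neg_sub] at this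
  rw [← Finset.sum_Ico_eq_sub _ hmn, completedPartialSum, completedPartialSum,
    add_sub_add_left_eq_sub, ← Finset.sum_Ico_eq_sub _ hmn]
  exact (hB.sub hB).sum_smul_mem_smul_set ⟨b 0 - b 0, Set.sub_mem_sub (hb 0) (hb 0)⟩
    (fun k _ => hl k) (fun k _ => Set.sub_mem_sub (hb k) (hb 0))

end CompletedPartialSum

theorem seqComplete_bounded_convex_is_sigmaConvex {Y : Type*} [AddCommGroup Y]
    [Module ℝ Y] [UniformSpace Y] [IsUniformAddGroup Y] [ContinuousSMul ℝ Y]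
    (B : Set Y) (hBconv : Convex ℝ B)
    (hBbdd : Bornology.IsVonNBounded ℝ B)
    (hBsc : ∀ seq : ℕ → Y, (∀ n, seq n ∈ B) → CauchySeq seq →
      ∃ b ∈ B, Tendsto seq atTop (nhds b)) :
    SigmaConvex B := by
  intro b l hb hl hlim
  have hsum : HasSum l 1 := (hasSum_iff_tendsto_nat_of_nonneg hl 1).2 hlim
  obtain ⟨p, hpB, hp⟩ := hBsc (completedPartialSum b l)
    (fun N => completedPartialSum_mem hBconv hb hl (sum_le_hasSum _ (fun k _ => hl k) hsum))
    ((hBbdd.sub hBbdd).cauchySeq_of_sub_mem_smul hlim.cauchySeq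
      (completedPartialSum_sub_mem hBconv hb hl))
  have hmissing : Tendsto (fun N => (1 - ∑ k ∈ Finset.range N, l k) • b 0) atTop (𝓝 0) := by
    simpa using ((tendsto_const_nhds (x := (1 : ℝ))).sub hlim).smul_const (b 0)
  exact ⟨p, hpB, by simpa [completedPartialSum_eq] using hp.sub hmissing⟩
end

section
/- Let Y be a topological vector space with convex cone D, H ⊂ D\(−D), f : X → Y a map on a set X, and x₀ ∈ X. Suppose there exists ξ ∈ D⁺ ∩ H^{+s} (i.e., ξ is a continuous linear functional with ξ(d) ≥ 0 for all d ∈ D and inf{ξ(h) : h ∈ H} > 0) such that ξ is bounded below on the set (f(X) − f(x₀)) ∩ (−(⋃_{λ>0} λH + D)). Then there exists ε > 0 such that (f(x₀) − εH − D) ∩ f(X) = ∅. -/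
open Filter Topology Pointwise

lemma sub_mem_neg_add_of_mem_singleton_sub_sub {Y : Type*} [AddCommGroup Y] {A B : Set Y}
    {y₀ y : Y} (hy : y ∈ {y₀} - A - B) : y - y₀ ∈ -(A + B) := by
  obtain ⟨_, ⟨y₁, hy₁, a, ha, rfl⟩, b, hb, rfl⟩ := hy
  rw [Set.mem_singleton_iff.mp hy₁, Set.mem_neg, show -(y₀ - a - b - y₀) = a + b by abel]
  exact Set.add_mem_add ha hb

section

variable {Y : Type*} [AddCommGroup Y] [Module ℝ Y]

lemma smul_add_subset_iUnion_pos_smul_add {ε : ℝ} (hε : 0 < ε) (H D : Set Y) :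
    ε • H + D ⊆ (⋃ (l : ℝ) (_ : 0 < l), l • H) + D :=
  Set.add_subset_add_right (Set.subset_biUnion_of_mem (u := fun l : ℝ => l • H) hε)

lemma apply_le_of_mem_neg_smul_add {F : Type*} [FunLike F Y ℝ] [LinearMapClass F ℝ Y ℝ]
    (ξ : F) {H D : Set Y} {c ε : ℝ} {z : Y} (hε : 0 ≤ ε)
    (hξH : ∀ h ∈ H, c ≤ ξ h) (hξD : ∀ d ∈ D, 0 ≤ ξ d) (hz : z ∈ -(ε • H + D)) :
    ξ z ≤ -(ε * c) := by
  obtain ⟨_, ⟨h, hh, rfl⟩, d, hd, hsum⟩ := Set.mem_neg.mp hz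
  rw [← neg_neg z, ← hsum, map_neg, map_add, map_smul, smul_eq_mul]
  nlinarith [hξH h hh, hξD d hd]

end

theorem lower_bounded_implies_eps_efficient_general {X Y : Type*}
    [AddCommGroup Y] [Module ℝ Y] [TopologicalSpace Y]
    (D H : Set Y)
    (f : X → Y) (x₀ : X)
    (ξ : Y →L[ℝ] ℝ) (hξD : ∀ d ∈ D, 0 ≤ ξ d)
    (hξH : ∃ c : ℝ, 0 < c ∧ ∀ h ∈ H, c ≤ ξ h)
    (hbdd : ∃ m : ℝ, ∀ y ∈ (Set.range f - {f x₀}) ∩ (-((⋃ (l : ℝ) (_ : 0 < l), l • H) + D)),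
      m ≤ ξ y) :
    ∃ ε : ℝ, 0 < ε ∧ ({f x₀} - ε • H - D) ∩ Set.range f = ∅ := by
  obtain ⟨c, hc, hcH⟩ := hξH
  obtain ⟨m, hm⟩ := hbdd
  -- `ε` is chosen so that `ξ ≤ -(ε * c) < m` on `-(ε • H + D)`.
  set ε := (|m| + 1) / c
  have hε : 0 < ε := by positivity
  have hεc : -(ε * c) < m := by
    rw [div_mul_cancel₀ _ hc.ne']
    linarith [neg_abs_le m]
  refine ⟨ε, hε, Set.eq_empty_iff_forall_notMem.mpr ?_⟩
  rintro y ⟨hy, hyf⟩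
  have hz := sub_mem_neg_add_of_mem_singleton_sub_sub hy
  have hlow := hm (y - f x₀)
    ⟨Set.sub_mem_sub hyf rfl, Set.neg_subset_neg.mpr (smul_add_subset_iUnion_pos_smul_add hε H D) hz⟩
  linarith [apply_le_of_mem_neg_smul_add ξ hε.le hcH hξD hz]

theorem lower_bounded_implies_eps_efficient {X Y : Type*}
    [AddCommGroup Y] [Module ℝ Y] [TopologicalSpace Y] [IsTopologicalAddGroup Y]
    [ContinuousSMul ℝ Y]
    (D H : Set Y)
    (hDadd : ∀ a ∈ D, ∀ b ∈ D, a + b ∈ D)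
    (hDsmul : ∀ α : ℝ, 0 ≤ α → ∀ d ∈ D, α • d ∈ D)
    (hH : H ⊆ D \ (-D))
    (f : X → Y) (x₀ : X)
    (ξ : Y →L[ℝ] ℝ) (hξD : ∀ d ∈ D, 0 ≤ ξ d)
    (hξH : ∃ c : ℝ, 0 < c ∧ ∀ h ∈ H, c ≤ ξ h)
    (hbdd : ∃ m : ℝ, ∀ y ∈ (Set.range f - {f x₀}) ∩ (-((⋃ (l : ℝ) (_ : 0 < l), l • H) + D)),
      m ≤ ξ y) :
    ∃ ε : ℝ, 0 < ε ∧ ({f x₀} - ε • H - D) ∩ Set.range f = ∅ :=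
  lower_bounded_implies_eps_efficient_general D H f x₀ ξ hξD hξH hbdd
end

section
/- Let X = ℝ with the usual metric, Y = ℝ² ordered by D = {(y₁,y₂) : y₁ ≥ 0, y₂ ≥ 0}, H = {(1,1)}, and define f : ℝ → ℝ² by f(x) = (−x,−1) for x > 0, f(0) = (0,0), f(x) = (−1,x) for x < 0. Then with x₀ = 0 and ε = 2: (f(X) − f(x₀)) ∩ (−2H − D) = ∅, yet for every ξ ∈ D⁺ ∩ H^{+s} the set (f(X) − f(x₀)) ∩ (−(⋃_{λ>0} λH + D)) is not ξ-lower bounded. -/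
open Filter Topology Pointwise

theorem example_eps_efficient_not_lower_bounded
    (D : Set (ℝ × ℝ)) (hD : D = {p : ℝ × ℝ | 0 ≤ p.1 ∧ 0 ≤ p.2})
    (H : Set (ℝ × ℝ)) (hH : H = {((1 : ℝ), (1 : ℝ))})
    (f : ℝ → ℝ × ℝ)
    (hf : f = fun x => if 0 < x then (-x, -1) else if x = 0 then (0, 0) else (-1, x)) :
    (Set.range f - {f 0}) ∩ (-((2 : ℝ) • H) - D) = ∅ ∧
    ∀ ξ : (ℝ × ℝ) →L[ℝ] ℝ, (∀ d ∈ D, 0 ≤ ξ d) → 0 < ξ (1, 1) →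
      ¬ ∃ m : ℝ, ∀ y ∈ (Set.range f - {f 0}) ∩ (-((⋃ (l : ℝ) (_ : 0 < l), l • H) + D)),
        m ≤ ξ y := by
  have hf0 : f 0 = (0, 0) := by simp [hf]
  have hkey : ∀ ξ : (ℝ × ℝ) →L[ℝ] ℝ, ∀ a b : ℝ, ξ (a, b) = a * ξ (1, 0) + b * ξ (0, 1) := by
    intro ξ a b
    have h : (a, b) = a • ((1 : ℝ), (0 : ℝ)) + b • ((0 : ℝ), (1 : ℝ)) := by
      simp [Prod.ext_iff]
    rw [h, map_add, map_smul, map_smul, smul_eq_mul, smul_eq_mul]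
  -- membership lemma for f x for x ≥ 1 and x ≤ -1
  have hmemA : ∀ y : ℝ × ℝ, (∃ x : ℝ, f x = y) → y.1 ≤ -1 → y.2 ≤ -1 →
      y ∈ (Set.range f - {f 0}) ∩ (-((⋃ (l : ℝ) (_ : 0 < l), l • H) + D)) := by
    rintro y ⟨x, rfl⟩ h1 h2
    constructor
    · exact ⟨f x, Set.mem_range_self x, f 0, rfl, by rw [hf0]; simp⟩
    · rw [Set.mem_neg, Set.mem_add]
      refine ⟨((1 : ℝ), (1 : ℝ)), ?_, (-(f x).1 - 1, -(f x).2 - 1), ?_, ?_⟩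
      · simp only [Set.mem_iUnion]
        exact ⟨1, one_pos, by simp [hH]⟩
      · rw [hD]; constructor <;> simp <;> linarith
      · simp [Prod.ext_iff]
  constructor
  · ext y
    simp only [Set.mem_inter_iff, Set.mem_empty_iff_false, iff_false, not_and]
    rintro ⟨a, ⟨x, rfl⟩, b, hb, rfl⟩ hy
    rw [Set.mem_singleton_iff] at hb
    subst hb
    rw [Set.mem_sub] at hy
    obtain ⟨u, hu, d, hd, huv⟩ := hy
    rw [Set.mem_neg, hH, Set.smul_set_singleton, Set.mem_singleton_iff] at hu
    have hu1 : u.1 = -2 := by have h := congrArg Prod.fst hu; simp at h; linarith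
    have hu2 : u.2 = -2 := by have h := congrArg Prod.snd hu; simp at h; linarith
    have k1 := congrArg Prod.fst huv
    have k2 := congrArg Prod.snd huv
    simp [hf0, hu1, hu2] at k1 k2
    rw [hD] at hd
    rcases lt_trichotomy 0 x with hx | hx | hx
    · rw [hf] at k2; simp [hx] at k2; linarith [hd.2]
    · rw [hf] at k1; simp [← hx] at k1; linarith [hd.1]
    · rw [hf] at k1; simp [hx.ne, not_lt.mpr hx.le] at k1; linarith [hd.1]
  · rintro ξ hDpos hHpos ⟨m, hm⟩
    have hA : 0 ≤ ξ (1, 0) := hDpos _ (by rw [hD]; constructor <;> norm_num)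
    have hB : 0 ≤ ξ (0, 1) := hDpos _ (by rw [hD]; constructor <;> norm_num)
    have hAB : 0 < ξ (1, 0) + ξ (0, 1) := by
      have h := hkey ξ 1 1
      linarith
    rcases hA.lt_or_eq with hA' | hA'
    · -- use y = f x = (-x, -1) for large x
      set x : ℝ := max 1 ((-m - ξ (0, 1)) / ξ (1, 0) + 1) with hxdef
      have hx1 : (1 : ℝ) ≤ x := le_max_left _ _
      have hx2 : (-m - ξ (0, 1)) / ξ (1, 0) + 1 ≤ x := le_max_right _ _
      have hfx : f x = (-x, -1) := by simp [hf, lt_of_lt_of_le one_pos hx1]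
      have hy := hm (f x) (hmemA (f x) ⟨x, rfl⟩ (by rw [hfx]; simpa using hx1) (by rw [hfx]))
      rw [hfx, hkey ξ (-x) (-1)] at hy
      have : (-m - ξ (0, 1)) / ξ (1, 0) < x := by linarith
      rw [div_lt_iff₀ hA'] at this
      nlinarith
    · have hB' : 0 < ξ (0, 1) := by linarith
      set x : ℝ := min (-1) (-((-m - ξ (1, 0)) / ξ (0, 1)) - 1) with hxdef
      have hx1 : x ≤ -1 := min_le_left _ _
      have hx2 : x ≤ -((-m - ξ (1, 0)) / ξ (0, 1)) - 1 := min_le_right _ _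
      have hxneg : x < 0 := by linarith
      have hfx : f x = (-1, x) := by simp [hf, not_lt.mpr hxneg.le, hxneg.ne]
      have hy := hm (f x) (hmemA (f x) ⟨x, rfl⟩ (by rw [hfx]) (by rw [hfx]; exact hx1))
      rw [hfx, hkey ξ (-1) x] at hy
      have : (-m - ξ (1, 0)) / ξ (0, 1) < -x := by linarith
      rw [div_lt_iff₀ hB'] at this
      nlinarith
end

section
/- Let Y be a real vector space, D ⊂ Y a convex cone, and k₀ ∈ D\(−D). Define ξ_{k₀}(y) = inf{t ∈ ℝ : y ∈ tk₀ − D} (with +∞ if no such t). Then there exists z ∈ Y with ξ_{k₀}(z) = −∞ if and only if k₀ ∈ −vcl(D). -/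
open Filter Topology Pointwise

/-- The Gerstewitz function generated by `D` and `k₀`. -/
noncomputable def xiK {Y : Type*} [AddCommGroup Y] [Module ℝ Y] (D : Set Y) (k₀ : Y)
    (y : Y) : EReal :=
  sInf ((fun t : ℝ => (t : EReal)) '' {t : ℝ | y ∈ t • ({k₀} : Set Y) - D})

lemma mem_aux {Y : Type*} [AddCommGroup Y] [Module ℝ Y] (D : Set Y) (k₀ z : Y) (t : ℝ) :
    z ∈ t • ({k₀} : Set Y) - D ↔ t • k₀ - z ∈ D := by
  simp only [Set.smul_set_singleton, Set.singleton_sub, Set.mem_image]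
  constructor
  · rintro ⟨d, hd, rfl⟩; simpa using hd
  · intro h; exact ⟨t • k₀ - z, h, by abel⟩

theorem xiK_eq_bot_iff {Y : Type*} [AddCommGroup Y] [Module ℝ Y] (D : Set Y)
    (hDadd : ∀ a ∈ D, ∀ b ∈ D, a + b ∈ D)
    (hDsmul : ∀ α : ℝ, 0 ≤ α → ∀ d ∈ D, α • d ∈ D)
    (hDnontriv : D ≠ {0} ∧ D ≠ Set.univ)
    (k₀ : Y) (hk₀ : k₀ ∈ D \ (-D)) :
    (∃ z : Y, xiK D k₀ z = ⊥) ↔ k₀ ∈ -vcl D := by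
  rw [Set.mem_neg]
  constructor
  · rintro ⟨z, hz⟩
    rw [xiK, sInf_eq_bot] at hz
    obtain ⟨a, ⟨t₀, ht₀, rfl⟩, -⟩ := hz 0 (EReal.bot_lt_coe 0)
    have H : ∀ n : ℕ, ∃ t : ℝ, (z ∈ t • ({k₀} : Set Y) - D) ∧ t < t₀ - (n + 1) := by
      intro n
      obtain ⟨a, ⟨t, ht, rfl⟩, hlt⟩ := hz ((t₀ - (n + 1) : ℝ) : EReal) (EReal.bot_lt_coe _)
      refine ⟨t, ht, ?_⟩
      have h' : (t : EReal) < ((t₀ - (n + 1) : ℝ) : EReal) := hlt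
      exact_mod_cast h'
    choose f hf1 hf2 using H
    have hpos : ∀ n : ℕ, (0 : ℝ) < t₀ - f n := by
      intro n
      have h := hf2 n
      nlinarith [Nat.cast_nonneg (α := ℝ) n]
    set l : ℕ → ℝ := fun n => 1 / (t₀ - f n) with hl
    refine ⟨t₀ • k₀ - z, l, fun n => le_of_lt (by have := hpos n; positivity), ?_, ?_⟩
    · apply squeeze_zero (g := fun n : ℕ => 1 / ((n : ℝ) + 1))
        (fun n => le_of_lt (by have := hpos n; positivity))
      · intro n
        apply one_div_le_one_div_of_le (by positivity)
        have := hf2 n; linarith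
      · exact tendsto_one_div_add_atTop_nhds_zero_nat
    · intro n
      have key : l n * (t₀ - f n) = 1 := one_div_mul_cancel (ne_of_gt (hpos n))
      have hdn : f n • k₀ - z ∈ D := (mem_aux D k₀ z (f n)).mp (hf1 n)
      have heq : -k₀ + l n • (t₀ • k₀ - z) = l n • (f n • k₀ - z) := by
        rw [smul_sub, smul_sub, smul_smul, smul_smul]
        have h2 : l n * f n = l n * t₀ - 1 := by
          have := mul_sub (l n) t₀ (f n); linarith [key]
        rw [h2, sub_smul, one_smul]; abel
      rw [heq]
      exact hDsmul (l n) (le_of_lt (by have := hpos n; positivity)) _ hdn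
  · rintro ⟨v, l, hl0, hltend, hlmem⟩
    have hlpos : ∀ n, 0 < l n := by
      intro n
      rcases lt_or_eq_of_le (hl0 n) with h | h
      · exact h
      · exfalso
        have hm := hlmem n
        rw [← h, zero_smul, add_zero] at hm
        exact hk₀.2 (Set.mem_neg.mpr hm)
    refine ⟨-v, ?_⟩
    rw [xiK, sInf_eq_bot]
    intro b hb
    have hmem : ∀ n : ℕ, (-(1 / l n)) ∈ {t : ℝ | (-v) ∈ t • ({k₀} : Set Y) - D} := by
      intro n
      rw [Set.mem_setOf_eq, mem_aux]
      have h3 : (-(1 / l n)) • k₀ - (-v) = (1 / l n) • (-k₀ + l n • v) := by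
        rw [smul_add, smul_smul, one_div_mul_cancel (ne_of_gt (hlpos n)), one_smul,
          smul_neg]
        module
      rw [h3]
      exact hDsmul _ (le_of_lt (by have := hlpos n; positivity)) _ (hlmem n)
    induction b using EReal.rec with
    | bot => exact absurd hb (lt_irrefl _)
    | top => exact ⟨_, ⟨_, hmem 0, rfl⟩, EReal.coe_lt_top _⟩
    | coe r =>
        have hδ : (0 : ℝ) < 1 / (1 + max 0 (-r)) := by positivity
        obtain ⟨n, hn⟩ := (hltend.eventually (gt_mem_nhds hδ)).exists
        refine ⟨_, ⟨_, hmem n, rfl⟩, ?_⟩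
        rw [EReal.coe_lt_coe_iff]
        have hln := hlpos n
        have hmr : max 0 (-r) ≥ -r := le_max_right _ _
        have hm1 : (0:ℝ) < 1 + max 0 (-r) := by positivity
        have h0 : l n * (1 + max 0 (-r)) < 1 := (lt_div_iff₀ hm1).mp hn
        have h1 : 1 + max 0 (-r) < 1 / l n := by
          rw [lt_div_iff₀ hln]
          nlinarith
        linarith
end
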